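/- arXiv:1606.08048 — 7 statements merged into one kernel-verified Lean document; each statement's English description precedes it below -/
import Mathlib

section
/- Let X be a Banach space, X_1,...,X_n complemented subspaces with projections P_1,...,P_n satisfying P_i|_{X_j} = 0 whenever i > j. Then X_1 + ... + X_n is complemented in X, and I - (I - P_1)(I - P_2)...(I - P_n) is a projection onto X_1 + ... + X_n. -/
/-! Write `Q = (1 - P₁) ⋯ (1 - Pₙ)`. For `i < j` we have `Pⱼ Pᵢ = 0`, so `Pⱼ (1 - Pᵢ) = Pⱼ` and
`Pⱼ Q = Pⱼ (1 - Pⱼ) ⋯ (1 - Pₙ) = 0`; hence every factor `1 - Pⱼ` fixes `Q`, and `Q² = Q`.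
Symmetrically `(1 - Pᵢ₊₁) ⋯ (1 - Pₙ)` fixes `Pᵢ`, so `Q Pᵢ = 0` and `1 - Q` is the identity on each
`Xᵢ`. Finally `1 - Q = ∑ᵢ Pᵢ (1 - Pᵢ₊₁) ⋯ (1 - Pₙ)` takes values in `X₁ + ⋯ + Xₙ`. -/

section Triangular

variable {R : Type*} [Ring R]

theorem prod_ofFn_one_sub_mul_eq_self :
    ∀ {n : ℕ} {p : Fin n → R} {x : R}, (∀ i, p i * x = 0) →
      (List.ofFn fun i => 1 - p i).prod * x = x
  | 0, _, _, _ => by simp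
  | _ + 1, p, x, h => by
    rw [List.ofFn_succ, List.prod_cons, mul_assoc,
      prod_ofFn_one_sub_mul_eq_self fun i => h i.succ, sub_mul, one_mul, h 0, sub_zero]

variable {n : ℕ} {p : Fin n → R}

theorem mul_prod_ofFn_one_sub_eq_zero (hp : ∀ i, IsIdempotentElem (p i))
    (htri : ∀ i j, j < i → p i * p j = 0) (j : Fin n) :
    p j * (List.ofFn fun i => 1 - p i).prod = 0 := by
  induction n with
  | zero => exact j.elim0
  | succ n ih =>
    rw [List.ofFn_succ, List.prod_cons, ← mul_assoc]
    cases j using Fin.cases with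
    | zero => rw [mul_sub, mul_one, (hp 0).eq, sub_self, zero_mul]
    | succ k =>
      rw [mul_sub, mul_one, htri _ _ k.succ_pos, sub_zero]
      exact ih (fun i => hp i.succ) (fun i j hji => htri _ _ (Fin.succ_lt_succ_iff.2 hji)) k

theorem prod_ofFn_one_sub_mul_eq_zero (hp : ∀ i, IsIdempotentElem (p i))
    (htri : ∀ i j, j < i → p i * p j = 0) (i : Fin n) :
    (List.ofFn fun i => 1 - p i).prod * p i = 0 := by
  induction n with
  | zero => exact i.elim0
  | succ n ih =>
    rw [List.ofFn_succ, List.prod_cons, mul_assoc]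
    cases i using Fin.cases with
    | zero =>
      rw [prod_ofFn_one_sub_mul_eq_self fun j => htri _ _ j.succ_pos, sub_mul, one_mul, (hp 0).eq,
        sub_self]
    | succ k =>
      rw [ih (fun i => hp i.succ) (fun i j hji => htri _ _ (Fin.succ_lt_succ_iff.2 hji)) k,
        mul_zero]

theorem isIdempotentElem_prod_ofFn_one_sub (hp : ∀ i, IsIdempotentElem (p i))
    (htri : ∀ i j, j < i → p i * p j = 0) :
    IsIdempotentElem (List.ofFn fun i => 1 - p i).prod :=
  prod_ofFn_one_sub_mul_eq_self (mul_prod_ofFn_one_sub_eq_zero hp htri)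

end Triangular

namespace LinearMap

variable {R M : Type*} [Ring R] [AddCommGroup M] [Module R M]

theorem range_one_sub_prod_ofFn_one_sub_le :
    ∀ {n : ℕ} (f : Fin n → Module.End R M),
      range (1 - (List.ofFn fun i => 1 - f i).prod) ≤ ⨆ i, range (f i)
  | 0, _ => by simp
  | _ + 1, f => by
    set q := (List.ofFn fun i => 1 - f (Fin.succ i)).prod
    have hsplit : 1 - (1 - f 0) * q = (1 - q) + f 0 * q := by noncomm_ring
    rw [List.ofFn_succ, List.prod_cons, hsplit]
    refine (range_add_le _ _).trans (sup_le ?_ ?_)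
    · exact (range_one_sub_prod_ofFn_one_sub_le fun i => f i.succ).trans
        (iSup_le fun i => le_iSup (fun i => range (f i)) i.succ)
    · exact (range_comp_le_range _ _).trans (le_iSup (fun i => range (f i)) 0)

theorem range_one_sub_prod_ofFn_one_sub {n : ℕ} {f : Fin n → Module.End R M}
    (hf : ∀ i, IsIdempotentElem (f i)) (htri : ∀ i j, j < i → f i * f j = 0) :
    range (1 - (List.ofFn fun i => 1 - f i).prod) = ⨆ i, range (f i) := by
  refine (range_one_sub_prod_ofFn_one_sub_le f).antisymm (iSup_le fun i => ?_)
  have hfix : (1 - (List.ofFn fun i => 1 - f i).prod) * f i = f i := by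
    rw [sub_mul, one_mul, prod_ofFn_one_sub_mul_eq_zero hf htri i, sub_zero]
  exact hfix ▸ range_comp_le_range (f i) _

end LinearMap

theorem sum_proj_of_triangular_general {𝕜 : Type*} [RCLike 𝕜] {X : Type*} [NormedAddCommGroup X]
    [NormedSpace 𝕜 X] {n : ℕ}
    (Xs : Fin n → Submodule 𝕜 X) (P : Fin n → X →L[𝕜] X)
    (hidem : ∀ i, ∀ x, P i (P i x) = P i x)
    (hrange : ∀ i, LinearMap.range (P i : X →ₗ[𝕜] X) = Xs i)
    (hzero : ∀ i j, j < i → ∀ x ∈ Xs j, P i x = 0) :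
    (∀ x, (1 - (List.ofFn fun i => (1 : X →L[𝕜] X) - P i).prod)
        ((1 - (List.ofFn fun i => (1 : X →L[𝕜] X) - P i).prod) x) =
        (1 - (List.ofFn fun i => (1 : X →L[𝕜] X) - P i).prod) x) ∧
      LinearMap.range ((1 - (List.ofFn fun i => (1 : X →L[𝕜] X) - P i).prod : X →L[𝕜] X) : X →ₗ[𝕜] X) = (⨆ i, Xs i) ∧
      (⨆ i, Xs i).ClosedComplemented := by
  set E : X →L[𝕜] X := 1 - (List.ofFn fun i => 1 - P i).prod
  let f : Fin n → Module.End 𝕜 X := fun i => P i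
  have hf : ∀ i, IsIdempotentElem (f i) := fun i => LinearMap.ext (hidem i)
  have htri : ∀ i j, j < i → f i * f j = 0 := fun i j hji => LinearMap.ext fun x =>
    hzero i j hji _ (hrange j ▸ LinearMap.mem_range_self _ x)
  have hcoe : (E : X →ₗ[𝕜] X) = 1 - (List.ofFn fun i => 1 - f i).prod := by
    have hprod := map_list_prod (ContinuousLinearMap.toLinearMapRingHom (R₁ := 𝕜) (M₁ := X))
      (List.ofFn fun i => 1 - P i)
    simp only [ContinuousLinearMap.toLinearMapRingHom_apply, List.map_ofFn, Function.comp_def,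
      ContinuousLinearMap.toLinearMap_sub, ContinuousLinearMap.toLinearMap_one] at hprod
    simp only [E, ContinuousLinearMap.toLinearMap_sub, ContinuousLinearMap.toLinearMap_one, hprod, f]
  have hE : IsIdempotentElem E := by
    rw [← ContinuousLinearMap.isIdempotentElem_toLinearMap_iff, hcoe]
    exact (isIdempotentElem_prod_ofFn_one_sub hf htri).one_sub
  have hrangeE : LinearMap.range (E : X →ₗ[𝕜] X) = ⨆ i, Xs i := by
    simp only [hcoe, LinearMap.range_one_sub_prod_ofFn_one_sub hf htri, f, hrange]
  exact ⟨fun x => congr($hE.eq x), hrangeE,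
    hrangeE ▸ (ContinuousLinearMap.IsIdempotentElem.isTopCompl hE).closedComplemented⟩

/-- If `P i` are continuous linear projections onto subspaces `Xs i` of a Banach space with
`P i` vanishing on `Xs j` whenever `i > j`, then `I - (I - P 1)...(I - P n)` is a continuous
linear projection onto `X₁ + ... + Xₙ`, which is therefore complemented. -/
theorem sum_proj_of_triangular {𝕜 : Type*} [RCLike 𝕜] {X : Type*} [NormedAddCommGroup X]
    [NormedSpace 𝕜 X] [CompleteSpace X] {n : ℕ}
    (Xs : Fin n → Submodule 𝕜 X) (P : Fin n → X →L[𝕜] X)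
    (hidem : ∀ i, ∀ x, P i (P i x) = P i x)
    (hrange : ∀ i, LinearMap.range (P i : X →ₗ[𝕜] X) = Xs i)
    (hzero : ∀ i j, j < i → ∀ x ∈ Xs j, P i x = 0) :
    (∀ x, (1 - (List.ofFn fun i => (1 : X →L[𝕜] X) - P i).prod)
        ((1 - (List.ofFn fun i => (1 : X →L[𝕜] X) - P i).prod) x) =
        (1 - (List.ofFn fun i => (1 : X →L[𝕜] X) - P i).prod) x) ∧
      LinearMap.range ((1 - (List.ofFn fun i => (1 : X →L[𝕜] X) - P i).prod : X →L[𝕜] X) : X →ₗ[𝕜] X) = (⨆ i, Xs i) ∧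
      (⨆ i, Xs i).ClosedComplemented :=
  sum_proj_of_triangular_general Xs P hidem hrange hzero
end

section
/- Let X be a Banach space, P_1,...,P_n continuous linear projections onto subspaces X_1,...,X_n, and let ε_{ij} ≥ 0 satisfy ‖P_i x‖ ≤ ε_{ij}‖x‖ for all x ∈ X_j whenever i ≠ j. Form the n×n matrix E with zero diagonal and off-diagonal entries ε_{ij}. If the spectral radius of E is strictly less than 1, then X_1 + ... + X_n is complemented in X, and ker(P_1) ∩ ... ∩ ker(P_n) is a complement of X_1 + ... + X_n in X. -/
/-!
Let `S : (Π i, Xᵢ) → X` be the addition map and `v = (P₁, …, Pₙ) : X → Π i, Xᵢ`. Since `Pᵢ` fixes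
`Xᵢ`, `T := 1 - v ∘ S` has zero diagonal blocks and `‖(T y)ᵢ‖ ≤ ∑ⱼ εᵢⱼ ‖yⱼ‖`; iterating,
`‖Tᵐ‖ ≤ ‖Eᵐ‖_∞`, so Gelfand's formula gives `r(T) ≤ r(E) < 1` and `v ∘ S` is invertible.
Then `S (v S)⁻¹ v` is a continuous projection onto `range S = X₁ + ⋯ + Xₙ` with kernel
`ker v = ker P₁ ∩ ⋯ ∩ ker Pₙ`.
-/

/-- The spectral radius of a real matrix is `< c` iff every complex eigenvalue has norm `< c`. -/
def SpecRadLT {n : ℕ} (E : Matrix (Fin n) (Fin n) ℝ) (c : ℝ) : Prop :=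
  ∀ z ∈ spectrum ℂ (E.map (Complex.ofReal · : ℝ → ℂ)), ‖z‖ < c

attribute [local instance] Matrix.linftyOpNormedAddCommGroup Matrix.linftyOpNormedRing
  Matrix.linftyOpNormedAlgebra

open Filter Finset Matrix
open scoped NNReal

theorem spectrum.spectralRadius_le_of_nnnorm_pow_le {𝕜 A B : Type*} [NontriviallyNormedField 𝕜]
    [NormedRing A] [NormedAlgebra 𝕜 A] [CompleteSpace A]
    [NormedRing B] [NormedAlgebra ℂ B] [CompleteSpace B] {a : A} {b : B}
    (h : ∀ n : ℕ, ‖a ^ n‖₊ ≤ ‖b ^ n‖₊) : spectralRadius 𝕜 a ≤ spectralRadius ℂ b :=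
  (spectralRadius_le_liminf_pow_nnnorm_pow_one_div 𝕜 a).trans <|
    (liminf_le_liminf (Eventually.of_forall fun n => by gcongr; exact h n)).trans_eq
      (pow_nnnorm_pow_one_div_tendsto_nhds_spectralRadius b).liminf_eq

theorem Matrix.linfty_opNNNorm_map_ofReal {m n : Type*} [Fintype m] [Fintype n]
    (E : Matrix m n ℝ) : ‖E.map (Complex.ofReal · : ℝ → ℂ)‖₊ = ‖E‖₊ := by
  simp only [linfty_opNNNorm_def, map_apply, Complex.nnnorm_real]

theorem Matrix.mulVec_mono_of_nonneg {m n : Type*} [Fintype n] {B : Matrix m n ℝ}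
    (hB : ∀ i j, 0 ≤ B i j) {v w : n → ℝ} (h : v ≤ w) : B *ᵥ v ≤ B *ᵥ w := fun i =>
  sum_le_sum fun j _ => mul_le_mul_of_nonneg_left (h j) (hB i j)

theorem SpecRadLT.spectralRadius_lt {n : ℕ} {E : Matrix (Fin n) (Fin n) ℝ} {c : ℝ≥0}
    (hc : 0 < c) (h : SpecRadLT E c) :
    spectralRadius ℂ (E.map (Complex.ofReal · : ℝ → ℂ)) < c := by
  rcases (spectrum ℂ (E.map (Complex.ofReal · : ℝ → ℂ))).eq_empty_or_nonempty with he | hne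
  · simpa [spectralRadius, he] using hc
  · exact spectrum.spectralRadius_lt_of_forall_lt_of_nonempty hne fun z hz => h z hz

namespace ContinuousLinearMap

section Domination

variable {𝕜 ι : Type*} [NontriviallyNormedField 𝕜] [Fintype ι] {F : ι → Type*}
  [∀ i, SeminormedAddCommGroup (F i)] [∀ i, NormedSpace 𝕜 (F i)]
  {T : (Π i, F i) →L[𝕜] Π i, F i} {B : Matrix ι ι ℝ}

theorem norm_pow_apply_le_mulVec [DecidableEq ι] (hB : ∀ i j, 0 ≤ B i j)
    (hT : ∀ y i, ‖T y i‖ ≤ (B *ᵥ fun j => ‖y j‖) i) (m : ℕ) (y : Π i, F i) (i : ι) :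
    ‖(T ^ m) y i‖ ≤ (B ^ m *ᵥ fun j => ‖y j‖) i := by
  induction m generalizing i with
  | zero => simp
  | succ m ih =>
    rw [pow_succ', mul_apply_eq_comp, pow_succ', ← mulVec_mulVec]
    exact (hT _ i).trans (mulVec_mono_of_nonneg hB ih i)

theorem opNorm_le_linfty_of_norm_apply_le_mulVec
    (hT : ∀ y i, ‖T y i‖ ≤ (B *ᵥ fun j => ‖y j‖) i) : ‖T‖ ≤ ‖B‖ := by
  refine opNorm_le_bound _ (norm_nonneg B) fun y =>
    (pi_norm_le_iff_of_nonneg (by positivity)).mpr fun i => ?_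
  have hnorms : ‖fun j => ‖y j‖‖ ≤ ‖y‖ := (pi_norm_le_iff_of_nonneg (norm_nonneg y)).mpr
    fun j => (norm_norm (y j)).trans_le (norm_le_pi_norm y j)
  calc ‖T y i‖ ≤ (B *ᵥ fun j => ‖y j‖) i := hT y i
    _ ≤ ‖B *ᵥ fun j => ‖y j‖‖ := (Real.le_norm_self _).trans (norm_le_pi_norm _ i)
    _ ≤ ‖B‖ * ‖fun j => ‖y j‖‖ := linfty_opNorm_mulVec _ _
    _ ≤ ‖B‖ * ‖y‖ := by gcongr

end Domination

theorem isUnit_one_sub_of_norm_apply_le_mulVec {𝕜 : Type*} [NontriviallyNormedField 𝕜] {n : ℕ}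
    {F : Fin n → Type*} [∀ i, NormedAddCommGroup (F i)] [∀ i, NormedSpace 𝕜 (F i)]
    [∀ i, CompleteSpace (F i)] {T : (Π i, F i) →L[𝕜] Π i, F i} {B : Matrix (Fin n) (Fin n) ℝ}
    (hB : ∀ i j, 0 ≤ B i j) (hT : ∀ y i, ‖T y i‖ ≤ (B *ᵥ fun j => ‖y j‖) i)
    (hr : SpecRadLT B 1) : IsUnit (1 - T) := by
  have hpow (m : ℕ) : ‖T ^ m‖₊ ≤ ‖(B.map (Complex.ofReal · : ℝ → ℂ)) ^ m‖₊ := by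
    have hmap : (B.map (Complex.ofReal · : ℝ → ℂ)) ^ m = (B ^ m).map (Complex.ofReal · : ℝ → ℂ) :=
      (B.map_pow Complex.ofRealHom m).symm
    rw [hmap, linfty_opNNNorm_map_ofReal]
    exact opNorm_le_linfty_of_norm_apply_le_mulVec (norm_pow_apply_le_mulVec hB hT m)
  have hρ : spectralRadius 𝕜 T < ‖(1 : 𝕜)‖₊ := by
    simpa using (spectrum.spectralRadius_le_of_nnnorm_pow_le hpow).trans_lt
      (SpecRadLT.spectralRadius_lt one_pos hr)
  simpa using spectrum.mem_resolventSet_iff.mp (spectrum.mem_resolventSet_of_spectralRadius_lt hρ)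

theorem exists_proj_range_of_isUnit_comp {R X Y : Type*} [Ring R]
    [TopologicalSpace X] [AddCommGroup X] [Module R X]
    [TopologicalSpace Y] [AddCommGroup Y] [Module R Y]
    (S : Y →L[R] X) (v : X →L[R] Y) (h : IsUnit (v ∘L S)) :
    ∃ q : X →L[R] LinearMap.range (S : Y →ₗ[R] X),
      (∀ x : LinearMap.range (S : Y →ₗ[R] X), q x = x) ∧
        LinearMap.ker (q : X →ₗ[R] LinearMap.range (S : Y →ₗ[R] X)) =
          LinearMap.ker (v : X →ₗ[R] Y) := by
  obtain ⟨u, hu⟩ := h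
  set w : Y →L[R] Y := ↑u⁻¹
  have hvSw (y : Y) : v (S (w y)) = y := by
    simpa [hu] using DFunLike.congr_fun u.mul_inv y
  have hwvS (y : Y) : w (v (S y)) = y := by
    simpa [hu] using DFunLike.congr_fun u.inv_mul y
  refine ⟨(S ∘L w ∘L v).codRestrict _ fun x => LinearMap.mem_range_self _ _, ?_, ?_⟩
  · rintro ⟨_, y, rfl⟩
    exact Subtype.ext (congrArg S (hwvS y))
  · ext x
    rw [LinearMap.mem_ker, LinearMap.mem_ker, ← Submodule.coe_eq_zero]
    change S (w (v x)) = 0 ↔ v x = 0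
    refine ⟨fun hx => ?_, fun hx => by simp [hx]⟩
    simpa [hvSw] using congrArg v hx

end ContinuousLinearMap

theorem Submodule.range_sum_subtypeL_comp_proj {R X ι : Type*} [Ring R] [Fintype ι]
    [TopologicalSpace X] [AddCommGroup X] [Module R X] [ContinuousAdd X]
    (p : ι → Submodule R X) :
    LinearMap.range ((∑ i, (p i).subtypeL ∘L ContinuousLinearMap.proj i :
      (Π i, p i) →L[R] X) : (Π i, p i) →ₗ[R] X) = ⨆ i, p i := by
  ext x
  have := mem_iSup_finset_iff_exists_sum (s := univ) p x
  simp only [mem_univ, iSup_pos] at this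
  simp [this]

theorem norm_sub_apply_sum_le_mulVec {R X ι : Type*} [Ring R] [SeminormedAddCommGroup X]
    [Module R X] [Fintype ι] [DecidableEq ι] {Xs : ι → Submodule R X} {P : ι → X →L[R] X}
    {E : Matrix ι ι ℝ} (hE : ∀ i j, 0 ≤ E i j)
    (hfix : ∀ i, ∀ x ∈ Xs i, P i x = x)
    (hbound : ∀ i j, i ≠ j → ∀ x ∈ Xs j, ‖P i x‖ ≤ E i j * ‖x‖) (y : Π i, Xs i) (i : ι) :
    ‖(y i : X) - P i (∑ j, (y j : X))‖ ≤ (E *ᵥ fun j => ‖y j‖) i := by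
  rw [map_sum, ← add_sum_erase _ _ (mem_univ i), hfix i _ (y i).2, sub_add_cancel_left, norm_neg]
  calc ‖∑ j ∈ univ.erase i, P i (y j)‖ ≤ ∑ j ∈ univ.erase i, ‖P i (y j)‖ := norm_sum_le _ _
    _ ≤ ∑ j ∈ univ.erase i, E i j * ‖y j‖ :=
      sum_le_sum fun j hj => hbound i j (ne_of_mem_erase hj).symm _ (y j).2
    _ ≤ ∑ j, E i j * ‖y j‖ :=
      sum_le_sum_of_subset_of_nonneg (erase_subset _ _) fun j _ _ =>
        mul_nonneg (hE i j) (norm_nonneg _)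

/-- If `P i` are continuous linear projections onto subspaces `Xs i` with
`‖P i x‖ ≤ ε i j * ‖x‖` for `x ∈ Xs j` (`i ≠ j`), and the matrix `E` with zero diagonal and
entries `ε i j` off the diagonal has spectral radius `< 1`, then `X₁ + ... + Xₙ` is
complemented and `ker P₁ ∩ ... ∩ ker Pₙ` is a complement of it. -/
theorem sum_complemented_of_spectralRadius_lt_one {𝕜 : Type*} [RCLike 𝕜] {X : Type*}
    [NormedAddCommGroup X] [NormedSpace 𝕜 X] [CompleteSpace X] {n : ℕ}
    (Xs : Fin n → Submodule 𝕜 X) (P : Fin n → X →L[𝕜] X)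
    (hidem : ∀ i, ∀ x, P i (P i x) = P i x)
    (hrange : ∀ i, LinearMap.range (P i : X →ₗ[𝕜] X) = Xs i)
    (ε : Fin n → Fin n → ℝ) (hε : ∀ i j, 0 ≤ ε i j)
    (hbound : ∀ i j, i ≠ j → ∀ x ∈ Xs j, ‖P i x‖ ≤ ε i j * ‖x‖)
    (E : Matrix (Fin n) (Fin n) ℝ)
    (hEdef : ∀ i j, E i j = if i = j then 0 else ε i j)
    (hr : SpecRadLT E 1) :
    (⨆ i, Xs i).ClosedComplemented ∧
      IsCompl (⨆ i, Xs i) (⨅ i, LinearMap.ker (P i : X →ₗ[𝕜] X)) := by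
  have hmem (i : Fin n) (x : X) : P i x ∈ Xs i := hrange i ▸ LinearMap.mem_range_self _ x
  have hfix (i : Fin n) : ∀ x ∈ Xs i, P i x = x := by
    rw [← hrange i]
    rintro _ ⟨z, rfl⟩
    exact hidem i z
  have hcomplete (i : Fin n) : CompleteSpace (Xs i) := by
    rw [← hrange i]
    exact (ContinuousLinearMap.IsIdempotentElem.isClosed_range
      (ContinuousLinearMap.ext (hidem i))).completeSpace_coe
  have hE (i j : Fin n) : 0 ≤ E i j := by
    rw [hEdef]
    split_ifs <;> simp [hε]
  let S : (Π i, Xs i) →L[𝕜] X := ∑ i, (Xs i).subtypeL ∘L ContinuousLinearMap.proj i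
  let v : X →L[𝕜] Π i, Xs i := ContinuousLinearMap.pi fun i => (P i).codRestrict (Xs i) (hmem i)
  have hboundE (i j : Fin n) (hij : i ≠ j) : ∀ x ∈ Xs j, ‖P i x‖ ≤ E i j * ‖x‖ := by
    simpa [hEdef, hij] using hbound i j hij
  have hT (y : Π i, Xs i) (i : Fin n) : ‖(1 - v ∘L S) y i‖ ≤ (E *ᵥ fun j => ‖y j‖) i := by
    simpa [S, v] using norm_sub_apply_sum_le_mulVec hE hfix hboundE y i
  have hunit : IsUnit (v ∘L S) := by
    simpa using ContinuousLinearMap.isUnit_one_sub_of_norm_apply_le_mulVec hE hT hr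
  have hker : LinearMap.ker (v : X →ₗ[𝕜] Π i, Xs i) = ⨅ i, LinearMap.ker (P i : X →ₗ[𝕜] X) := by
    ext x
    simp [v, Submodule.mem_iInf, funext_iff, Subtype.ext_iff]
  obtain ⟨q, hq, hqker⟩ := S.exists_proj_range_of_isUnit_comp v hunit
  rw [← Submodule.range_sum_subtypeL_comp_proj, ← hker, ← hqker]
  exact ⟨⟨q, hq⟩, LinearMap.isCompl_of_proj hq⟩
end

section
/- Under the hypotheses of the previous theorem (spectral radius of E less than 1), with A = P_1 + ... + P_n, the sequence of operators I - (I - A)^N converges in operator norm, as N → ∞, to the projection P onto X_1 + ... + X_n along ker(P_1) ∩ ... ∩ ker(P_n). -/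
/-!
Let `W` be the closed subspace of tuples `(xᵢ)` with `xᵢ ∈ Xᵢ`, `σ : W → X` the sum map and
`π = (Pᵢ)ᵢ : X → W`, so that `A = σ π` and `(1 - A)ᵏ σ = σ (1 - π σ)ᵏ`. Since `xᵢ = Pᵢ xᵢ`, the
`i`-th component of `(1 - π σ) x` is `-∑_{j ≠ i} Pᵢ xⱼ`: its norm is at most the `i`-th entry of
`E (‖xⱼ‖)ⱼ`, hence `‖(1 - π σ)ᵏ‖ ≤ ‖Eᵏ‖` in the `ℓ∞` operator norm, and this is summable by
Gelfand's formula because `r(E) < 1`. So `π σ` is invertible on `W` with inverse the Neumann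
series `R`, and `1 - (1 - A)ᴺ = σ (∑_{k<N} (1 - π σ)ᵏ) π → σ R π = Q`. Finally `Q σ = σ` and
`π Q = π` show that `Q` is the projection with range `σ W = ∑ Xᵢ` and kernel `ker π = ⋂ ker Pᵢ`.
-/

open Filter Topology
open scoped Matrix

theorem summable_norm_pow_of_spectralRadius_lt_one {A : Type*} [NormedRing A]
    [NormedAlgebra ℂ A] [CompleteSpace A] {a : A} (ha : spectralRadius ℂ a < 1) :
    Summable fun k : ℕ => ‖a ^ k‖ := by
  obtain ⟨r, har, hr1⟩ := exists_between ha
  lift r to NNReal using (hr1.trans ENNReal.one_lt_top).ne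
  have hev : ∀ᶠ k : ℕ in atTop, ‖‖a ^ k‖‖ ≤ (r : ℝ) ^ k := by
    have gelfand := spectrum.pow_nnnorm_pow_one_div_tendsto_nhds_spectralRadius a
    filter_upwards [gelfand.eventually_lt_const har, eventually_gt_atTop 0] with k hk hk0
    rw [one_div, ENNReal.rpow_inv_lt_iff (by positivity), ENNReal.rpow_natCast,
      ← ENNReal.coe_pow, ENNReal.coe_lt_coe] at hk
    simpa using (NNReal.coe_lt_coe.2 hk).le
  exact .of_norm_bounded_eventually_nat
    (summable_geometric_of_lt_one r.2 (by exact_mod_cast hr1)) hev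

theorem Matrix.le_pow_mulVec_of_le_mulVec {ι V : Type*} [Fintype ι] [DecidableEq ι]
    {E : Matrix ι ι ℝ} (hE : ∀ i j, 0 ≤ E i j) {f : V → V} {ν : V → ι → ℝ}
    (hf : ∀ v, ν (f v) ≤ E *ᵥ ν v) (k : ℕ) (v : V) : ν (f^[k] v) ≤ (E ^ k) *ᵥ ν v := by
  induction k with
  | zero => simp
  | succ k ih =>
    calc ν (f^[k + 1] v) = ν (f (f^[k] v)) := by rw [Function.iterate_succ_apply']
      _ ≤ E *ᵥ ν (f^[k] v) := hf _
      _ ≤ E *ᵥ ((E ^ k) *ᵥ ν v) := fun i =>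
          Finset.sum_le_sum fun j _ => mul_le_mul_of_nonneg_left (ih j) (hE i j)
      _ = (E ^ (k + 1)) *ᵥ ν v := by rw [Matrix.mulVec_mulVec, pow_succ']

section Factorization

variable {𝕜 : Type*} [NontriviallyNormedField 𝕜] {X V : Type*} [NormedAddCommGroup X]
  [NormedSpace 𝕜 X] [NormedAddCommGroup V] [NormedSpace 𝕜 V] (σ : V →L[𝕜] X) (π : X →L[𝕜] V)

theorem one_sub_comp_pow_comp (k : ℕ) :
    ((1 - σ ∘L π) ^ k) ∘L σ = σ ∘L ((1 - π ∘L σ) ^ k) := by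
  induction k with
  | zero => rfl
  | succ k ih =>
    have hstep : (1 - σ ∘L π) ∘L σ = σ ∘L (1 - π ∘L σ) := by
      rw [ContinuousLinearMap.sub_comp, ContinuousLinearMap.comp_sub]
      rfl
    rw [pow_succ, pow_succ, ContinuousLinearMap.mul_def, ContinuousLinearMap.mul_def,
      ContinuousLinearMap.comp_assoc, hstep, ← ContinuousLinearMap.comp_assoc, ih,
      ContinuousLinearMap.comp_assoc]

theorem one_sub_one_sub_comp_pow (N : ℕ) :
    1 - (1 - σ ∘L π) ^ N = σ ∘L (∑ k ∈ Finset.range N, (1 - π ∘L σ) ^ k) ∘L π := by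
  rw [← geom_sum_mul_neg, sub_sub_cancel, ContinuousLinearMap.mul_def,
    ContinuousLinearMap.finsetSum_comp, ContinuousLinearMap.finsetSum_comp,
    ContinuousLinearMap.comp_finsetSum]
  refine Finset.sum_congr rfl fun k _ => ?_
  rw [← ContinuousLinearMap.comp_assoc, one_sub_comp_pow_comp, ContinuousLinearMap.comp_assoc]

theorem exists_isIdempotentElem_tendsto_one_sub_one_sub_comp_pow [CompleteSpace V]
    (h : Summable fun k => ‖(1 - π ∘L σ) ^ k‖) :
    ∃ Q : X →L[𝕜] X, IsIdempotentElem Q ∧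
      LinearMap.range (Q : X →ₗ[𝕜] X) = LinearMap.range (σ : V →ₗ[𝕜] X) ∧
      LinearMap.ker (Q : X →ₗ[𝕜] X) = LinearMap.ker (π : X →ₗ[𝕜] V) ∧
      Tendsto (fun N : ℕ => 1 - (1 - σ ∘L π) ^ N) atTop (𝓝 Q) := by
  have hS : Summable fun k => (1 - π ∘L σ) ^ k := .of_norm h
  set R := ∑' k, (1 - π ∘L σ) ^ k
  have hQσ : ∀ v, σ (R (π (σ v))) = σ v := fun v => by
    simpa using congr(σ ($(hS.tsum_pow_mul_one_sub) v))
  have hπQ : ∀ x, π (σ (R (π x))) = π x := fun x => by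
    simpa using congr($(hS.one_sub_mul_tsum_pow) (π x))
  refine ⟨σ ∘L R ∘L π, ContinuousLinearMap.ext fun x => hQσ _, ?_, ?_, ?_⟩
  · refine le_antisymm (LinearMap.range_comp_le_range _ _) ?_
    rintro _ ⟨v, rfl⟩
    exact ⟨σ v, hQσ v⟩
  · refine le_antisymm (fun x hx => ?_)
      (LinearMap.ker_le_ker_comp (π : X →ₗ[𝕜] V) (σ ∘L R : V →ₗ[𝕜] X))
    rw [LinearMap.mem_ker, ContinuousLinearMap.coe_coe] at hx ⊢
    rw [← hπQ x]
    simpa using congr(π $hx)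
  · simp_rw [one_sub_one_sub_comp_pow]
    have hcont : Continuous fun F : V →L[𝕜] V => σ ∘L F ∘L π := by fun_prop
    exact (hcont.tendsto R).comp hS.hasSum.tendsto_sum_nat

end Factorization

section LinftyOpNorm

attribute [local instance] Matrix.linftyOpNormedAddCommGroup Matrix.linftyOpNormedRing
  Matrix.linftyOpNormedAlgebra

attribute [local instance] Matrix.linftyOpSeminormedAddCommGroup in
theorem Matrix.linfty_opNorm_map_eq {m n α β : Type*} [Fintype m] [Fintype n]
    [SeminormedAddCommGroup α] [SeminormedAddCommGroup β] (A : Matrix m n α) (f : α → β)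
    (hf : ∀ a, ‖f a‖₊ = ‖a‖₊) : ‖A.map f‖ = ‖A‖ := by
  simp [Matrix.linfty_opNorm_def, hf]

theorem Matrix.summable_norm_pow_of_specRadLT {n : ℕ} {E : Matrix (Fin n) (Fin n) ℝ}
    (hE : SpecRadLT E 1) : Summable fun k : ℕ => ‖E ^ k‖ := by
  set F := E.map (Complex.ofReal · : ℝ → ℂ)
  have hF : spectralRadius ℂ F < 1 := by
    rcases subsingleton_or_nontrivial (Matrix (Fin n) (Fin n) ℂ) with _ | _
    · simp [spectrum.SpectralRadius.of_subsingleton]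
    · exact_mod_cast spectrum.spectralRadius_lt_of_forall_lt F (r := 1) fun z hz => by
        simpa [← NNReal.coe_lt_coe] using hE z hz
  have hpow : ∀ k, F ^ k = (E ^ k).map (Complex.ofReal · : ℝ → ℂ) := fun k =>
    (map_pow Complex.ofRealHom.mapMatrix E k).symm
  simpa [hpow, Matrix.linfty_opNorm_map_eq _ _ Complex.nnnorm_real] using
    summable_norm_pow_of_spectralRadius_lt_one hF

end LinftyOpNorm

section Tuples

variable {𝕜 : Type*} [NontriviallyNormedField 𝕜] {X : Type*} [NormedAddCommGroup X]
  [NormedSpace 𝕜 X] {ι : Type*} (P : ι → X →L[𝕜] X)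

def rangeTuples : Submodule 𝕜 (ι → X) :=
  Submodule.pi Set.univ fun i => LinearMap.range (P i : X →ₗ[𝕜] X)

def tupleProj : X →L[𝕜] rangeTuples P :=
  (ContinuousLinearMap.pi P).codRestrict _ fun x _ _ => LinearMap.mem_range_self _ x

@[simp] theorem coe_tupleProj_apply (x : X) (i : ι) : (tupleProj P x : ι → X) i = P i x := rfl

theorem isClosed_rangeTuples (hP : ∀ i, IsIdempotentElem (P i)) :
    IsClosed (rangeTuples P : Set (ι → X)) := by
  rw [rangeTuples, Submodule.coe_pi]
  exact isClosed_set_pi fun i _ => ContinuousLinearMap.IsIdempotentElem.isClosed_range (hP i)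

theorem ker_tupleProj : LinearMap.ker (tupleProj P : X →ₗ[𝕜] rangeTuples P) =
    ⨅ i, LinearMap.ker (P i : X →ₗ[𝕜] X) := by
  ext x
  simp only [LinearMap.mem_ker, Submodule.mem_iInf, ContinuousLinearMap.coe_coe,
    ← Subtype.coe_inj, funext_iff, coe_tupleProj_apply, Submodule.coe_zero, Pi.zero_apply]

variable [Fintype ι]

def tupleSum : rangeTuples P →L[𝕜] X :=
  (∑ i, ContinuousLinearMap.proj i) ∘L (rangeTuples P).subtypeL

@[simp] theorem tupleSum_apply (w : rangeTuples P) : tupleSum P w = ∑ i, (w : ι → X) i := by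
  simp [tupleSum]

theorem tupleSum_comp_tupleProj : tupleSum P ∘L tupleProj P = ∑ i, P i := by
  ext x; simp

theorem range_tupleSum : LinearMap.range (tupleSum P : rangeTuples P →ₗ[𝕜] X) =
    ⨆ i, LinearMap.range (P i : X →ₗ[𝕜] X) := by
  apply le_antisymm
  · rintro _ ⟨w, rfl⟩
    simpa using Submodule.sum_mem _ fun i _ => Submodule.mem_iSup_of_mem i (w.2 i (Set.mem_univ i))
  · classical
    refine iSup_le fun j x hx => ⟨⟨Pi.single j x, fun i _ => ?_⟩, by simp⟩
    rcases eq_or_ne i j with rfl | hij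
    · simpa using hx
    · simp [hij]

variable [DecidableEq ι]

attribute [local instance] Matrix.linftyOpNormedAddCommGroup Matrix.linftyOpNormedRing

theorem norm_one_sub_tupleProj_comp_apply_le (hP : ∀ i, IsIdempotentElem (P i)) {E : Matrix ι ι ℝ}
    (hE : ∀ i j, 0 ≤ E i j)
    (hPE : ∀ i j, i ≠ j → ∀ x ∈ LinearMap.range (P j : X →ₗ[𝕜] X), ‖P i x‖ ≤ E i j * ‖x‖)
    (w : rangeTuples P) :
    (fun i => ‖((1 - tupleProj P ∘L tupleSum P) w : ι → X) i‖) ≤ E *ᵥ fun i => ‖(w : ι → X) i‖ := by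
  intro i
  have hw : ∀ j, (w : ι → X) j ∈ LinearMap.range (P j : X →ₗ[𝕜] X) := fun j => w.2 j trivial
  have hwi : P i ((w : ι → X) i) = (w : ι → X) i := (LinearMap.IsIdempotentElem.mem_range_iff
    (ContinuousLinearMap.IsIdempotentElem.toLinearMap (hP i))).1 (hw i)
  have hcomp : ((1 - tupleProj P ∘L tupleSum P) w : ι → X) i =
      -∑ j ∈ Finset.univ.erase i, P i ((w : ι → X) j) := by
    rw [Finset.sum_erase_eq_sub (Finset.mem_univ i), hwi]
    simp
  calc ‖((1 - tupleProj P ∘L tupleSum P) w : ι → X) i‖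
      ≤ ∑ j ∈ Finset.univ.erase i, ‖P i ((w : ι → X) j)‖ := by
        rw [hcomp, norm_neg]; exact norm_sum_le _ _
    _ ≤ ∑ j ∈ Finset.univ.erase i, E i j * ‖(w : ι → X) j‖ :=
        Finset.sum_le_sum fun j hj => hPE i j (Finset.ne_of_mem_erase hj).symm _ (hw j)
    _ ≤ ∑ j, E i j * ‖(w : ι → X) j‖ :=
        Finset.sum_le_sum_of_subset_of_nonneg (Finset.erase_subset _ _)
          fun j _ _ => mul_nonneg (hE i j) (norm_nonneg _)

theorem norm_one_sub_tupleProj_comp_pow_le (hP : ∀ i, IsIdempotentElem (P i)) {E : Matrix ι ι ℝ}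
    (hE : ∀ i j, 0 ≤ E i j)
    (hPE : ∀ i j, i ≠ j → ∀ x ∈ LinearMap.range (P j : X →ₗ[𝕜] X), ‖P i x‖ ≤ E i j * ‖x‖)
    (k : ℕ) : ‖(1 - tupleProj P ∘L tupleSum P) ^ k‖ ≤ ‖E ^ k‖ := by
  refine ContinuousLinearMap.opNorm_le_bound _ (norm_nonneg _) fun w => ?_
  refine (pi_norm_le_iff_of_nonneg (by positivity)).2 fun i => ?_
  rw [FunLike.coe_pow_eq_iterate]
  calc ‖(((⇑(1 - tupleProj P ∘L tupleSum P))^[k] w : rangeTuples P) : ι → X) i‖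
      ≤ ((E ^ k) *ᵥ fun i => ‖(w : ι → X) i‖) i :=
        Matrix.le_pow_mulVec_of_le_mulVec (ν := fun v : rangeTuples P => fun i => ‖(v : ι → X) i‖)
          hE (norm_one_sub_tupleProj_comp_apply_le P hP hE hPE) k w i
    _ ≤ ‖(E ^ k) *ᵥ fun i => ‖(w : ι → X) i‖‖ := (Real.le_norm_self _).trans (norm_le_pi_norm _ i)
    _ ≤ ‖E ^ k‖ * ‖fun i => ‖(w : ι → X) i‖‖ := Matrix.linfty_opNorm_mulVec _ _
    _ = ‖E ^ k‖ * ‖w‖ := by simp [Pi.norm_def]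

end Tuples

/-- Under the hypotheses `r(E) < 1`, with `A = P₁ + ... + Pₙ`, the operators `I - (I - A)^N`
converge in operator norm, as `N → ∞`, to the projection onto `X₁ + ... + Xₙ` along
`ker P₁ ∩ ... ∩ ker Pₙ`. -/
theorem tendsto_proj_of_spectralRadius_lt_one {𝕜 : Type*} [RCLike 𝕜] {X : Type*}
    [NormedAddCommGroup X] [NormedSpace 𝕜 X] [CompleteSpace X] {n : ℕ}
    (Xs : Fin n → Submodule 𝕜 X) (P : Fin n → X →L[𝕜] X)
    (hidem : ∀ i, ∀ x, P i (P i x) = P i x)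
    (hrange : ∀ i, LinearMap.range (P i : X →ₗ[𝕜] X) = Xs i)
    (ε : Fin n → Fin n → ℝ) (hε : ∀ i j, 0 ≤ ε i j)
    (hbound : ∀ i j, i ≠ j → ∀ x ∈ Xs j, ‖P i x‖ ≤ ε i j * ‖x‖)
    (E : Matrix (Fin n) (Fin n) ℝ)
    (hEdef : ∀ i j, E i j = if i = j then 0 else ε i j)
    (hr : SpecRadLT E 1) :
    ∃ Q : X →L[𝕜] X, (∀ x, Q (Q x) = Q x) ∧
      LinearMap.range (Q : X →ₗ[𝕜] X) = (⨆ i, Xs i) ∧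
      LinearMap.ker (Q : X →ₗ[𝕜] X) = (⨅ i, LinearMap.ker (P i : X →ₗ[𝕜] X)) ∧
      Filter.Tendsto (fun N : ℕ => 1 - (1 - ∑ i, P i) ^ N) Filter.atTop (nhds Q) := by
  obtain rfl : Xs = fun i => LinearMap.range (P i : X →ₗ[𝕜] X) := funext fun i => (hrange i).symm
  have hP : ∀ i, IsIdempotentElem (P i) := fun i => ContinuousLinearMap.ext (hidem i)
  have hE : ∀ i j, 0 ≤ E i j := fun i j => by
    rw [hEdef]; split_ifs <;> simp [hε]
  have hPE : ∀ i j, i ≠ j → ∀ x ∈ LinearMap.range (P j : X →ₗ[𝕜] X), ‖P i x‖ ≤ E i j * ‖x‖ :=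
    fun i j hij => by simpa [hEdef, hij] using hbound i j hij
  have : CompleteSpace (rangeTuples P) := (isClosed_rangeTuples P hP).completeSpace_coe
  obtain ⟨Q, hQ, hQrange, hQker, hlim⟩ :=
    exists_isIdempotentElem_tendsto_one_sub_one_sub_comp_pow (tupleSum P) (tupleProj P)
      (.of_nonneg_of_le (fun k => norm_nonneg _) (norm_one_sub_tupleProj_comp_pow_le P hP hE hPE)
        (Matrix.summable_norm_pow_of_specRadLT hr))
  rw [tupleSum_comp_tupleProj] at hlim
  exact ⟨Q, fun x => congr($hQ x), hQrange.trans (range_tupleSum P),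
    hQker.trans (ker_tupleProj P), hlim⟩
end

section
/- Let P_1,...,P_n be continuous linear projections on a Banach space X onto X_1,...,X_n, with ‖P_i x‖ ≤ ε_{ij}‖x‖ for x ∈ X_j (i ≠ j), and E the associated matrix. Suppose w = (w_1,...,w_n) has positive coordinates and α ∈ [0,1) satisfy Ew ≤ αw coordinatewise. Then with A = P_1 + ... + P_n and P the projection onto X_1+...+X_n along ∩ker(P_i), for every N ≥ 1: ‖I - (I-A)^N - P‖ ≤ (w_1 + ... + w_n) · max_i (‖P_i‖ / w_i) · α^N / (1 - α). -/
/-!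
Put `T = 1 - ∑ i, P i`. Each `P i` vanishes on `ker Q`, so `T` fixes `ker Q` and
`(1 - T ^ N - Q) x = -T ^ N (Q x)`. Call `u` `c`-decomposable if `u = ∑ i, vᵢ` with `vᵢ ∈ Xᵢ` and
`‖vᵢ‖ ≤ c wᵢ`. As `P i` is the identity on `Xᵢ`, the `i`-th component of `T u` is
`-∑_{j ≠ i} P i vⱼ`, so `E w ≤ α w` makes `T u` `(c α)`-decomposable. Since `Q x` is decomposable,
`T ^ k (Q x) → 0`, and the increments `T ^ k (Q x) - T ^ (k + 1) (Q x) = T ^ k (∑ i, P i x)` are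
`(α ^ k ‖x‖ maxᵢ ‖P i‖ / wᵢ)`-decomposable, so the geometric tail bounds `T ^ N (Q x)`.
-/

open Filter Topology

section WeightedDecomposition

variable {𝕜 X ι : Type*} [NontriviallyNormedField 𝕜] [NormedAddCommGroup X] [NormedSpace 𝕜 X]
  [Fintype ι]

def HasWeightedDecomposition (Xs : ι → Submodule 𝕜 X) (w : ι → ℝ) (c : ℝ) (u : X) : Prop :=
  ∃ v : ι → X, (∀ i, v i ∈ Xs i) ∧ (∀ i, ‖v i‖ ≤ c * w i) ∧ u = ∑ i, v i

variable {Xs : ι → Submodule 𝕜 X} {P : ι → X →L[𝕜] X} {w : ι → ℝ} {ε : ι → ι → ℝ} {c α : ℝ}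
  {u : X}

theorem HasWeightedDecomposition.norm_le (h : HasWeightedDecomposition Xs w c u) :
    ‖u‖ ≤ c * ∑ i, w i := by
  obtain ⟨v, -, hv, rfl⟩ := h
  rw [Finset.mul_sum]
  exact norm_sum_le_of_le _ fun i _ => hv i

theorem HasWeightedDecomposition.one_sub_sum_apply [DecidableEq ι]
    (hPfix : ∀ i, ∀ x ∈ Xs i, P i x = x)
    (hPmem : ∀ i x, P i x ∈ Xs i) (hε : ∀ i j, 0 ≤ ε i j)
    (hbound : ∀ i j, i ≠ j → ∀ x ∈ Xs j, ‖P i x‖ ≤ ε i j * ‖x‖)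
    (hεw : ∀ i, ∑ j ∈ Finset.univ.erase i, ε i j * w j ≤ α * w i) (hc : 0 ≤ c)
    (h : HasWeightedDecomposition Xs w c u) :
    HasWeightedDecomposition Xs w (c * α) ((1 - ∑ i, P i) u) := by
  obtain ⟨v, hvmem, hvnorm, rfl⟩ := h
  refine ⟨fun i => -∑ j ∈ Finset.univ.erase i, P i (v j), fun i => ?_, fun i => ?_, ?_⟩
  · exact neg_mem (Submodule.sum_mem _ fun j _ => hPmem i _)
  · rw [norm_neg]
    calc ‖∑ j ∈ Finset.univ.erase i, P i (v j)‖
        ≤ ∑ j ∈ Finset.univ.erase i, ε i j * (c * w j) := by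
          refine norm_sum_le_of_le _ fun j hj => ?_
          exact (hbound i j (Finset.ne_of_mem_erase hj).symm _ (hvmem j)).trans
            (mul_le_mul_of_nonneg_left (hvnorm j) (hε i j))
      _ = c * ∑ j ∈ Finset.univ.erase i, ε i j * w j := by
          rw [Finset.mul_sum]
          exact Finset.sum_congr rfl fun j _ => by ring
      _ ≤ c * (α * w i) := mul_le_mul_of_nonneg_left (hεw i) hc
      _ = c * α * w i := by ring
  · have hdiag : ∀ i, v i - ∑ j, P i (v j) = -∑ j ∈ Finset.univ.erase i, P i (v j) := fun i => by
      rw [← Finset.add_sum_erase _ _ (Finset.mem_univ i), hPfix i _ (hvmem i)]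
      abel
    simp only [sub_apply, one_apply_eq_self, sum_apply, map_sum, ← hdiag, Finset.sum_sub_distrib]
    rw [Finset.sum_comm]

theorem HasWeightedDecomposition.pow_one_sub_sum_apply [DecidableEq ι]
    (hPfix : ∀ i, ∀ x ∈ Xs i, P i x = x)
    (hPmem : ∀ i x, P i x ∈ Xs i) (hε : ∀ i j, 0 ≤ ε i j)
    (hbound : ∀ i j, i ≠ j → ∀ x ∈ Xs j, ‖P i x‖ ≤ ε i j * ‖x‖)
    (hεw : ∀ i, ∑ j ∈ Finset.univ.erase i, ε i j * w j ≤ α * w i) (hα : 0 ≤ α) (hc : 0 ≤ c)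
    (h : HasWeightedDecomposition Xs w c u) (k : ℕ) :
    HasWeightedDecomposition Xs w (c * α ^ k) (((1 - ∑ i, P i) ^ k) u) := by
  induction k with
  | zero => simpa using h
  | succ k ih =>
    rw [pow_succ' (1 - ∑ i, P i), mul_apply_eq_comp, pow_succ, ← mul_assoc]
    exact ih.one_sub_sum_apply hPfix hPmem hε hbound hεw (by positivity)

theorem hasWeightedDecomposition_sum_apply (hPmem : ∀ i x, P i x ∈ Xs i) (hw : ∀ i, 0 < w i)
    (x : X) :
    HasWeightedDecomposition Xs w ((⨆ i, ‖P i‖ / w i) * ‖x‖) ((∑ i, P i) x) := by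
  refine ⟨fun i => P i x, fun i => hPmem i x, fun i => ?_, by simp⟩
  have hle : ‖P i‖ ≤ (⨆ i, ‖P i‖ / w i) * w i :=
    (div_le_iff₀ (hw i)).mp
      (le_ciSup (f := fun i => ‖P i‖ / w i) (Set.finite_range _).bddAbove i)
  calc ‖P i x‖ ≤ ‖P i‖ * ‖x‖ := (P i).le_opNorm x
    _ ≤ (⨆ i, ‖P i‖ / w i) * w i * ‖x‖ := by gcongr
    _ = (⨆ i, ‖P i‖ / w i) * ‖x‖ * w i := by ring

theorem exists_hasWeightedDecomposition_of_mem_iSup (hw : ∀ i, 0 < w i)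
    (hu : u ∈ ⨆ i, Xs i) : ∃ c, 0 ≤ c ∧ HasWeightedDecomposition Xs w c u := by
  obtain ⟨v, hvmem, hsum⟩ := (Submodule.mem_iSup_iff_exists_finsupp Xs u).mp hu
  have hnonneg : ∀ i, 0 ≤ ‖v i‖ / w i := fun i => div_nonneg (norm_nonneg _) (hw i).le
  refine ⟨∑ i, ‖v i‖ / w i, Finset.sum_nonneg fun i _ => hnonneg i,
    ⟨v, hvmem, fun i => ?_, by rw [← hsum, Finsupp.sum_fintype _ _ fun _ => rfl]⟩⟩
  rw [← div_le_iff₀ (hw i)]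
  exact Finset.single_le_sum (fun j _ => hnonneg j) (Finset.mem_univ i)

theorem pow_one_sub_sum_apply_eq_self_of_forall_apply_eq_zero {y : X} (hy : ∀ i, P i y = 0)
    (k : ℕ) : ((1 - ∑ i, P i) ^ k) y = y := by
  rw [pow_apply_eq_iterate]
  exact Function.iterate_fixed (by simp [hy]) k

variable {Q : X →L[𝕜] X}

theorem one_sub_pow_sub_apply_eq_neg {x : X} (hx : ∀ i, P i (x - Q x) = 0) (k : ℕ) :
    (1 - (1 - ∑ i, P i) ^ k - Q) x = -((1 - ∑ i, P i) ^ k) (Q x) := by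
  have hfix := pow_one_sub_sum_apply_eq_self_of_forall_apply_eq_zero hx k
  rw [map_sub, sub_eq_iff_eq_add] at hfix
  simp only [sub_apply, one_apply_eq_self, hfix]
  abel

theorem apply_sub_one_sub_sum_apply_eq {x : X} (hx : ∀ i, P i (x - Q x) = 0) :
    Q x - (1 - ∑ i, P i) (Q x) = (∑ i, P i) x := by
  have hsum : (∑ i, P i) (x - Q x) = 0 := by simp [hx]
  rw [map_sub, sub_eq_zero] at hsum
  simp [hsum]

end WeightedDecomposition

theorem sum_erase_mul_eq_sum_mul_of_eq_ite {ι : Type*} [Fintype ι] [DecidableEq ι]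
    {E ε : ι → ι → ℝ} (hE : ∀ i j, E i j = if i = j then 0 else ε i j) (w : ι → ℝ) (i : ι) :
    ∑ j ∈ Finset.univ.erase i, ε i j * w j = ∑ j, E i j * w j := by
  rw [← Finset.sum_erase (f := fun j => E i j * w j) (a := i) _ (by simp [hE])]
  exact Finset.sum_congr rfl fun j hj => by rw [hE, if_neg (Finset.ne_of_mem_erase hj).symm]

theorem apply_sub_apply_eq_zero_of_ker_eq_iInf {𝕜 X ι : Type*} [NontriviallyNormedField 𝕜]
    [NormedAddCommGroup X] [NormedSpace 𝕜 X] {P : ι → X →L[𝕜] X} {Q : X →L[𝕜] X}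
    (hQ : ∀ x, Q (Q x) = Q x)
    (hQker : LinearMap.ker (Q : X →ₗ[𝕜] X) = ⨅ i, LinearMap.ker (P i : X →ₗ[𝕜] X)) (x : X)
    (i : ι) : P i (x - Q x) = 0 := by
  have hx : x - Q x ∈ LinearMap.ker (Q : X →ₗ[𝕜] X) := by simp [hQ x]
  rw [hQker, Submodule.mem_iInf] at hx
  exact hx i

theorem rate_of_convergence_general {𝕜 : Type*} [RCLike 𝕜] {X : Type*}
    [NormedAddCommGroup X] [NormedSpace 𝕜 X] {n : ℕ}
    (Xs : Fin n → Submodule 𝕜 X) (P : Fin n → X →L[𝕜] X)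
    (hidem : ∀ i, ∀ x, P i (P i x) = P i x)
    (hrange : ∀ i, LinearMap.range (P i : X →ₗ[𝕜] X) = Xs i)
    (ε : Fin n → Fin n → ℝ) (hε : ∀ i j, 0 ≤ ε i j)
    (hbound : ∀ i j, i ≠ j → ∀ x ∈ Xs j, ‖P i x‖ ≤ ε i j * ‖x‖)
    (E : Matrix (Fin n) (Fin n) ℝ)
    (hEdef : ∀ i j, E i j = if i = j then 0 else ε i j)
    (w : Fin n → ℝ) (hw : ∀ i, 0 < w i)
    (α : ℝ) (hα0 : 0 ≤ α) (hα1 : α < 1)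
    (hEw : ∀ i, ∑ j, E i j * w j ≤ α * w i)
    (Q : X →L[𝕜] X) (hQ : ∀ x, Q (Q x) = Q x)
    (hQrange : LinearMap.range (Q : X →ₗ[𝕜] X) = (⨆ i, Xs i))
    (hQker : LinearMap.ker (Q : X →ₗ[𝕜] X) = (⨅ i, LinearMap.ker (P i : X →ₗ[𝕜] X))) :
    ∀ N : ℕ, 1 ≤ N →
      ‖1 - (1 - ∑ i, P i) ^ N - Q‖ ≤
        (∑ i, w i) * (⨆ i, ‖P i‖ / w i) * (α ^ N / (1 - α)) := by
  intro N _
  set T := 1 - ∑ i, P i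
  set M := ⨆ i, ‖P i‖ / w i
  have hPmem : ∀ i x, P i x ∈ Xs i := fun i x => hrange i ▸ ⟨x, rfl⟩
  have hPfix : ∀ i, ∀ x ∈ Xs i, P i x = x := by
    intro i x hx
    obtain ⟨y, rfl⟩ := (hrange i).symm ▸ hx
    exact hidem i y
  have hεw (i : Fin n) : ∑ j ∈ Finset.univ.erase i, ε i j * w j ≤ α * w i :=
    (sum_erase_mul_eq_sum_mul_of_eq_ite hEdef w i).trans_le (hEw i)
  have hM : 0 ≤ M := Real.iSup_nonneg fun i => div_nonneg (norm_nonneg _) (hw i).le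
  have hbound_nonneg : 0 ≤ (∑ i, w i) * M * (α ^ N / (1 - α)) :=
    mul_nonneg (mul_nonneg (Finset.sum_nonneg fun i _ => (hw i).le) hM)
      (div_nonneg (pow_nonneg hα0 N) (sub_nonneg.2 hα1.le))
  refine ContinuousLinearMap.opNorm_le_bound _ hbound_nonneg fun x => ?_
  have hker := apply_sub_apply_eq_zero_of_ker_eq_iInf hQ hQker x
  obtain ⟨c, hc, hQx⟩ := exists_hasWeightedDecomposition_of_mem_iSup hw
    (hQrange ▸ ⟨x, rfl⟩ : Q x ∈ ⨆ i, Xs i)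
  have hlim : Tendsto (fun k => (T ^ k) (Q x)) atTop (𝓝 0) := by
    refine squeeze_zero_norm (fun k =>
      (hQx.pow_one_sub_sum_apply hPfix hPmem hε hbound hεw hα0 hc k).norm_le) ?_
    simpa using ((tendsto_pow_atTop_nhds_zero_of_lt_one hα0 hα1).const_mul c).mul_const _
  have hstep (k : ℕ) :
      dist ((T ^ k) (Q x)) ((T ^ (k + 1)) (Q x)) ≤ (M * ‖x‖ * ∑ i, w i) * α ^ k := by
    rw [dist_eq_norm, pow_succ, mul_apply_eq_comp, ← map_sub, apply_sub_one_sub_sum_apply_eq hker]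
    exact ((hasWeightedDecomposition_sum_apply hPmem hw x).pow_one_sub_sum_apply hPfix hPmem hε
      hbound hεw hα0 (mul_nonneg hM (norm_nonneg x)) k).norm_le.trans_eq (by ring)
  calc ‖(1 - T ^ N - Q) x‖ = dist ((T ^ N) (Q x)) 0 := by
        rw [one_sub_pow_sub_apply_eq_neg hker, norm_neg, dist_zero_right]
    _ ≤ (M * ‖x‖ * ∑ i, w i) * α ^ N / (1 - α) :=
      dist_le_of_le_geometric_of_tendsto α _ hα1 hstep hlim N
    _ = (∑ i, w i) * M * (α ^ N / (1 - α)) * ‖x‖ := by ring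

/-- Rate of convergence of `I - (I - A)^N` to the projection `Q` onto `X₁ + ... + Xₙ` along
`ker P₁ ∩ ... ∩ ker Pₙ`, when `E w ≤ α w` coordinatewise for a positive vector `w` and
`α ∈ [0, 1)`. -/
theorem rate_of_convergence {𝕜 : Type*} [RCLike 𝕜] {X : Type*}
    [NormedAddCommGroup X] [NormedSpace 𝕜 X] [CompleteSpace X] {n : ℕ} (hn : 0 < n)
    (Xs : Fin n → Submodule 𝕜 X) (P : Fin n → X →L[𝕜] X)
    (hidem : ∀ i, ∀ x, P i (P i x) = P i x)
    (hrange : ∀ i, LinearMap.range (P i : X →ₗ[𝕜] X) = Xs i)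
    (ε : Fin n → Fin n → ℝ) (hε : ∀ i j, 0 ≤ ε i j)
    (hbound : ∀ i j, i ≠ j → ∀ x ∈ Xs j, ‖P i x‖ ≤ ε i j * ‖x‖)
    (E : Matrix (Fin n) (Fin n) ℝ)
    (hEdef : ∀ i j, E i j = if i = j then 0 else ε i j)
    (w : Fin n → ℝ) (hw : ∀ i, 0 < w i)
    (α : ℝ) (hα0 : 0 ≤ α) (hα1 : α < 1)
    (hEw : ∀ i, ∑ j, E i j * w j ≤ α * w i)
    (Q : X →L[𝕜] X) (hQ : ∀ x, Q (Q x) = Q x)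
    (hQrange : LinearMap.range (Q : X →ₗ[𝕜] X) = (⨆ i, Xs i))
    (hQker : LinearMap.ker (Q : X →ₗ[𝕜] X) = (⨅ i, LinearMap.ker (P i : X →ₗ[𝕜] X))) :
    ∀ N : ℕ, 1 ≤ N →
      ‖1 - (1 - ∑ i, P i) ^ N - Q‖ ≤
        (∑ i, w i) * (⨆ i, ‖P i‖ / w i) * (α ^ N / (1 - α)) :=
  rate_of_convergence_general Xs P hidem hrange ε hε hbound E hEdef w hw α hα0 hα1 hEw Q hQ hQrange
    hQker
end

section
/- Let E be an n×n matrix with nonnegative entries and zero diagonal. Then r(E) < 1 if and only if every principal minor of the matrix I - E is positive. -/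
/-!
For a nonnegative matrix `E`, all eigenvalues lie in the open unit disc iff there is no nonzero
`w ≥ 0` with `w ≤ E w`: such a `w` satisfies `w ≤ E ^ k w → 0` by Gelfand's formula, and
conversely the moduli of an eigenvector for an eigenvalue `|z| ≥ 1` form such a `w`.

This property passes to principal submatrices and to `t E` for `t ∈ [0, 1]`, where it makes
`I - t E` nonsingular; hence `det (I - t E_S)` cannot change sign between `t = 0` and `t = 1`.

Conversely, a matrix `A` with positive principal minors reverses the sign of no nonzero vector
(Fiedler–Pták): if `x i * (A x) i ≤ 0` for all `i`, then on the support of `x` the vector `x` lies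
in the kernel of `A_S + D` for a nonnegative diagonal `D`, while `det (A_S + D)` is a nonnegative
combination of principal minors of `A_S` with `det A_S` among them. For `A = I - E`, a vector
`w ≥ 0` with `w ≤ E w` would be such an `x`.
-/

open Filter Topology Function

theorem tendsto_pow_nhds_zero_of_forall_spectrum_norm_lt_one {A : Type*} [NormedRing A]
    [NormedAlgebra ℂ A] [CompleteSpace A] (a : A) (ha : ∀ z ∈ spectrum ℂ a, ‖z‖ < 1) :
    Tendsto (a ^ ·) atTop (𝓝 0) := by
  cases subsingleton_or_nontrivial A
  · exact tendsto_const_nhds.congr fun _ => Subsingleton.elim _ _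
  obtain ⟨r, hr, hr1⟩ := ENNReal.lt_iff_exists_nnreal_btwn.mp
    (spectrum.spectralRadius_lt_of_forall_lt a (r := 1) fun z hz => by exact_mod_cast ha z hz)
  have hbound : ∀ᶠ n : ℕ in atTop, ‖a ^ n‖ ≤ (r : ℝ) ^ n := by
    filter_upwards [(spectrum.pow_nnnorm_pow_one_div_tendsto_nhds_spectralRadius a
      ).eventually_lt_const hr, eventually_gt_atTop 0] with n hn hn0
    rw [one_div, ENNReal.rpow_inv_lt_iff (by positivity), ENNReal.rpow_natCast,
      ← ENNReal.coe_pow, ENNReal.coe_lt_coe] at hn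
    exact_mod_cast hn.le
  exact squeeze_zero_norm' hbound
    (tendsto_pow_atTop_nhds_zero_of_lt_one r.coe_nonneg (by exact_mod_cast hr1))

namespace Matrix

theorem det_add_diagonal {ι R : Type*} [Fintype ι] [DecidableEq ι] [CommRing R]
    (A : Matrix ι ι R) (d : ι → R) :
    (A + diagonal d).det =
      ∑ s : Finset ι, (∏ i ∈ sᶜ, d i) * (A.submatrix ((↑) : s → ι) (↑)).det := by
  have hrows : ∀ s : Finset ι, s.piecewise A.row (diagonal d).row =
      fun i => (if i ∈ s then 1 else d i) • s.piecewise A.row (1 : Matrix ι ι R).row i := by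
    intro s
    funext i j
    by_cases hi : i ∈ s <;> simp [hi, diagonal_apply, one_apply]
  change detRowAlternating (A.row + (diagonal d).row) = _
  rw [AlternatingMap.map_add_univ]
  refine Finset.sum_congr rfl fun s _ => ?_
  rw [hrows, AlternatingMap.map_smul_univ, Finset.prod_ite, Finset.prod_const_one, one_mul,
    smul_eq_mul, Finset.filter_not, Finset.filter_mem_eq_inter, Finset.univ_inter,
    ← Finset.compl_eq_univ_sdiff]
  exact congrArg _ (det_piecewise_one_eq_submatrix_det A s)

theorem submatrix_mulVec_comp_of_support_subset {l m ι κ R : Type*} [Fintype ι] [Fintype κ]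
    [NonUnitalNonAssocSemiring R] (A : Matrix m ι R) (f : l → m) {e : κ → ι} (he : Injective e)
    {x : ι → R} (hx : support x ⊆ Set.range e) :
    A.submatrix f e *ᵥ (x ∘ e) = (A *ᵥ x) ∘ f := by
  funext k
  refine Fintype.sum_of_injective e he _ _ (fun i hi => ?_) fun _ => rfl
  rw [notMem_support.mp (mt (@hx i) hi), mul_zero]

section PMatrix

variable {ι κ R : Type*} [DecidableEq ι] [DecidableEq κ]

def IsPMatrix [CommRing R] [PartialOrder R] (A : Matrix ι ι R) : Prop :=
  ∀ S : Finset ι, 0 < (A.submatrix ((↑) : S → ι) (↑)).det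

namespace IsPMatrix

theorem submatrix [CommRing R] [PartialOrder R] {A : Matrix ι ι R} (hA : A.IsPMatrix)
    {e : κ → ι} (he : Injective e) : (A.submatrix e e).IsPMatrix := by
  intro T
  let φ : T ≃ T.map ⟨e, he⟩ :=
    Equiv.ofBijective (fun t => ⟨e t, Finset.mem_map_of_mem _ t.2⟩)
      ⟨fun s t hst => Subtype.ext (he (congrArg Subtype.val hst)), by
        rintro ⟨_, hi⟩
        obtain ⟨k, hk, rfl⟩ := Finset.mem_map.mp hi
        exact ⟨⟨k, hk⟩, rfl⟩⟩
  rw [submatrix_submatrix, show e ∘ Subtype.val = Subtype.val ∘ φ from rfl,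
    ← submatrix_submatrix, det_submatrix_equiv_self]
  exact hA _

variable [Fintype ι]

theorem det_add_diagonal_pos [CommRing R] [PartialOrder R] [IsStrictOrderedRing R]
    {A : Matrix ι ι R} (hA : A.IsPMatrix) {d : ι → R} (hd : 0 ≤ d) :
    0 < (A + diagonal d).det := by
  rw [det_add_diagonal]
  refine Finset.sum_pos' (fun s _ => mul_nonneg (Finset.prod_nonneg fun i _ => hd i) (hA s).le)
    ⟨Finset.univ, Finset.mem_univ _, ?_⟩
  simpa using hA Finset.univ

theorem exists_mul_mulVec_pos [Field R] [LinearOrder R] [IsStrictOrderedRing R]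
    {A : Matrix ι ι R} (hA : A.IsPMatrix) {x : ι → R} (hx : x ≠ 0) :
    ∃ i, 0 < x i * (A *ᵥ x) i := by
  by_contra! hAx
  let e : {i // x i ≠ 0} → ι := Subtype.val
  let d : {i // x i ≠ 0} → R := fun k => -(A *ᵥ x) k / x k
  have hd : 0 ≤ d := fun k => by
    have hk : d k = -(x k * (A *ᵥ x) k) / x k ^ 2 := by simp only [d]; field_simp
    exact hk ▸ div_nonneg (neg_nonneg.mpr (hAx k)) (sq_nonneg _)
  have hker : (A.submatrix e e + diagonal d) *ᵥ (x ∘ e) = 0 := by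
    rw [add_mulVec, submatrix_mulVec_comp_of_support_subset A e (x := x) Subtype.val_injective
      fun i hi => ⟨⟨i, mem_support.mp hi⟩, rfl⟩]
    funext k
    simp [mulVec_diagonal, d, div_mul_cancel₀ _ k.2, e]
  have hxe : x ∘ e ≠ 0 := by
    obtain ⟨i, hi⟩ := Function.ne_iff.mp hx
    exact Function.ne_iff.mpr ⟨⟨i, hi⟩, hi⟩
  exact ((hA.submatrix Subtype.val_injective).det_add_diagonal_pos hd).ne'
    (exists_mulVec_eq_zero_iff.mp ⟨_, hxe, hker⟩)

end IsPMatrix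

end PMatrix

section Nonneg

variable {ι κ : Type*} [Fintype ι] [Fintype κ] {E : Matrix ι ι ℝ} (hE : ∀ i j, 0 ≤ E i j)
include hE

theorem mulVec_mono {u v : ι → ℝ} (huv : u ≤ v) : E *ᵥ u ≤ E *ᵥ v := fun i =>
  Finset.sum_le_sum fun j _ => mul_le_mul_of_nonneg_left (huv j) (hE i j)

theorem mulVec_nonneg {v : ι → ℝ} (hv : 0 ≤ v) : 0 ≤ E *ᵥ v := by
  simpa using mulVec_mono hE hv

theorem norm_map_mulVec_le {𝕜 : Type*} [NormedField 𝕜] [NormedAlgebra ℝ 𝕜] [NormOneClass 𝕜]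
    (v : ι → 𝕜) (i : ι) : ‖(E.map (algebraMap ℝ 𝕜) *ᵥ v) i‖ ≤ (E *ᵥ (‖v ·‖)) i :=
  (norm_sum_le _ _).trans_eq <| Finset.sum_congr rfl fun j _ => by
    simp [norm_mul, norm_algebraMap', abs_of_nonneg (hE i j)]

theorem eq_zero_of_le_submatrix_mulVec (hC : ∀ w, 0 ≤ w → w ≤ E *ᵥ w → w = 0) {e : κ → ι}
    (he : Injective e) (w : κ → ℝ) (hw0 : 0 ≤ w) (hw : w ≤ E.submatrix e e *ᵥ w) : w = 0 := by
  let u : ι → ℝ := extend e w 0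
  have hue : u ∘ e = w := funext fun k => he.extend_apply w 0 k
  have hu : support u ⊆ Set.range e := fun i hi => by
    by_contra hie
    exact hi (extend_apply' w (0 : ι → ℝ) i hie)
  have hu0 : 0 ≤ u := fun i => by
    by_cases hie : ∃ k, e k = i
    · obtain ⟨k, rfl⟩ := hie
      simpa [u, he.extend_apply] using hw0 k
    · simp [u, extend_apply' w (0 : ι → ℝ) i hie]
  have hEu : u ≤ E *ᵥ u := fun i => by
    by_cases hie : ∃ k, e k = i
    · obtain ⟨k, rfl⟩ := hie
      have := hw k
      rwa [← hue, submatrix_mulVec_comp_of_support_subset E e he hu] at this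
    · simpa [u, extend_apply' w (0 : ι → ℝ) i hie] using mulVec_nonneg hE hu0 i
  rw [← hue, hC u hu0 hEu]
  rfl

variable [DecidableEq ι]

theorem le_pow_mulVec_of_le_mulVec_s8 {w : ι → ℝ} (hw : w ≤ E *ᵥ w) (k : ℕ) :
    w ≤ E ^ k *ᵥ w := by
  induction k with
  | zero => simp
  | succ k ih =>
    calc w ≤ E *ᵥ w := hw
      _ ≤ E *ᵥ (E ^ k *ᵥ w) := mulVec_mono hE ih
      _ = E ^ (k + 1) *ᵥ w := by rw [mulVec_mulVec, pow_succ']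

theorem eq_zero_of_le_mulVec (hρ : ∀ z ∈ spectrum ℂ (E.map (Complex.ofReal · : ℝ → ℂ)), ‖z‖ < 1)
    {w : ι → ℝ} (hw0 : 0 ≤ w) (hw : w ≤ E *ᵥ w) : w = 0 := by
  have hpowC : Tendsto ((E.map (Complex.ofReal · : ℝ → ℂ)) ^ ·) atTop (𝓝 0) := by
    -- Any Banach algebra norm will do for Gelfand's formula; the `ℓ∞` operator norm induces
    -- the entrywise topology.
    let _ := Matrix.linftyOpNormedRing (n := ι) (α := ℂ)
    let _ := Matrix.linftyOpNormedAlgebra (n := ι) (R := ℂ) (α := ℂ)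
    exact tendsto_pow_nhds_zero_of_forall_spectrum_norm_lt_one _ hρ
  have hpow : Tendsto (E ^ ·) atTop (𝓝 0) := by
    have hre : ∀ k : ℕ, ((E.map (Complex.ofReal · : ℝ → ℂ)) ^ k).map Complex.re = E ^ k :=
      fun k => by
        rw [show E.map (Complex.ofReal · : ℝ → ℂ) = Complex.ofRealHom.mapMatrix E from rfl,
          ← map_pow]
        ext
        simp
    simpa [comp_def, hre] using
      ((continuous_id.matrix_map Complex.continuous_re).tendsto 0).comp hpowC
  have hpow_w := ((continuous_id.matrix_mulVec (continuous_const (y := w))).tendsto 0).comp hpow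
  exact le_antisymm (ge_of_tendsto' (by simpa [comp_def] using hpow_w)
    (le_pow_mulVec_of_le_mulVec_s8 hE hw)) hw0

theorem exists_le_mulVec_of_mem_spectrum {z : ℂ}
    (hz : z ∈ spectrum ℂ (E.map (Complex.ofReal · : ℝ → ℂ))) :
    ∃ w : ι → ℝ, 0 ≤ w ∧ w ≠ 0 ∧ ‖z‖ • w ≤ E *ᵥ w := by
  rw [← spectrum_toLin', ← Module.End.hasEigenvalue_iff_mem_spectrum] at hz
  obtain ⟨v, hv⟩ := hz.exists_hasEigenvector
  refine ⟨(‖v ·‖), fun i => norm_nonneg _, fun h => hv.2 ?_, fun i => ?_⟩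
  · funext i
    simpa using congrFun h i
  · calc ‖z‖ * ‖v i‖ = ‖(E.map (algebraMap ℝ ℂ) *ᵥ v) i‖ := by
          rw [← toLin'_apply, show E.map (algebraMap ℝ ℂ) = E.map (Complex.ofReal ·) from rfl,
            hv.apply_eq_smul, Pi.smul_apply, smul_eq_mul, norm_mul]
      _ ≤ (E *ᵥ (‖v ·‖)) i := norm_map_mulVec_le hE v i

theorem forall_spectrum_norm_lt_one_iff :
    (∀ z ∈ spectrum ℂ (E.map (Complex.ofReal · : ℝ → ℂ)), ‖z‖ < 1) ↔
      ∀ w : ι → ℝ, 0 ≤ w → w ≤ E *ᵥ w → w = 0 := by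
  refine ⟨fun hρ w => eq_zero_of_le_mulVec hE hρ, fun hC z hz => ?_⟩
  by_contra! hz1
  obtain ⟨w, hw0, hw_ne, hw⟩ := exists_le_mulVec_of_mem_spectrum hE hz
  exact hw_ne (hC w hw0 fun i => (le_mul_of_one_le_left (hw0 i) hz1).trans (hw i))

theorem det_one_sub_ne_zero (hC : ∀ w, 0 ≤ w → w ≤ E *ᵥ w → w = 0) : (1 - E).det ≠ 0 := by
  intro hdet
  obtain ⟨v, hv, hker⟩ := exists_mulVec_eq_zero_iff.mpr hdet
  rw [sub_mulVec, one_mulVec, sub_eq_zero] at hker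
  have hnorm : (‖v ·‖) = 0 := hC _ (fun i => norm_nonneg _) fun i => by
    simpa [← hker] using norm_map_mulVec_le hE v i
  exact hv (funext fun i => norm_eq_zero.mp (congrFun hnorm i))

theorem det_one_sub_pos (hC : ∀ w, 0 ≤ w → w ≤ E *ᵥ w → w = 0) : 0 < (1 - E).det := by
  let f : ℝ → ℝ := fun t => (1 - t • E).det
  have hf : Continuous f :=
    (continuous_const.sub (continuous_id.smul continuous_const)).matrix_det
  have hf_ne : ∀ t ∈ Set.Icc (0 : ℝ) 1, f t ≠ 0 := fun t ⟨ht0, ht1⟩ => by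
    refine det_one_sub_ne_zero (E := t • E) (fun i j => mul_nonneg ht0 (hE i j))
      fun w hw0 hw => hC w hw0 ?_
    refine hw.trans fun i => ?_
    rw [smul_mulVec, Pi.smul_apply, smul_eq_mul]
    exact mul_le_of_le_one_left (mulVec_nonneg hE hw0 i) ht1
  by_contra! h1
  obtain ⟨t, ht, hft⟩ := intermediate_value_Icc' zero_le_one hf.continuousOn
    ⟨by simpa [f] using h1, by simp [f]⟩
  exact hf_ne t ht hft

end Nonneg

end Matrix

open Matrix in
theorem spectralRadius_lt_one_iff_principal_minors_pos_general {n : ℕ}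
    (E : Matrix (Fin n) (Fin n) ℝ) (hE : ∀ i j, 0 ≤ E i j) :
    (∀ z ∈ spectrum ℂ (E.map (Complex.ofReal · : ℝ → ℂ)), ‖z‖ < 1) ↔
      ∀ S : Finset (Fin n),
        0 < ((1 - E).submatrix (fun i : S => (i : Fin n)) fun i : S => (i : Fin n)).det := by
  rw [forall_spectrum_norm_lt_one_iff hE]
  constructor
  · intro hC S
    simp only [submatrix_sub, Pi.sub_apply, submatrix_one _ Subtype.val_injective]
    exact det_one_sub_pos (E := E.submatrix ((↑) : S → Fin n) (↑)) (fun i j => hE _ _)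
      (eq_zero_of_le_submatrix_mulVec hE hC Subtype.val_injective)
  · intro hP w hw0 hw
    by_contra hw_ne
    obtain ⟨i, hi⟩ := IsPMatrix.exists_mul_mulVec_pos hP hw_ne
    have hAw : ((1 - E) *ᵥ w) i ≤ 0 := by simpa [sub_mulVec] using hw i
    exact hi.not_ge (mul_nonpos_of_nonneg_of_nonpos (hw0 i) hAw)

/-- For an `n × n` real matrix `E` with nonnegative entries and zero diagonal, the spectral
radius of `E` is `< 1` iff every principal minor of `I - E` is positive. -/
theorem spectralRadius_lt_one_iff_principal_minors_pos {n : ℕ}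
    (E : Matrix (Fin n) (Fin n) ℝ) (hE : ∀ i j, 0 ≤ E i j) (hdiag : ∀ i, E i i = 0) :
    (∀ z ∈ spectrum ℂ (E.map (Complex.ofReal · : ℝ → ℂ)), ‖z‖ < 1) ↔
      ∀ S : Finset (Fin n),
        0 < ((1 - E).submatrix (fun i : S => (i : Fin n)) fun i : S => (i : Fin n)).det :=
  spectralRadius_lt_one_iff_principal_minors_pos_general E hE
end

section
/- Let (Ω, F, μ) be a probability space and A, B sub-σ-algebras of F. Define ψ'(A,B) = inf{ μ(A∩B)/(μ(A)μ(B)) : A ∈ A, B ∈ B, μ(A) > 0, μ(B) > 0 }. Then 0 ≤ ψ'(A,B) ≤ 1, and ψ'(A,B) = 1 if and only if A and B are independent. -/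
open MeasureTheory

/-- The dependence coefficient
`ψ'(𝒜, ℬ) = inf { μ(A ∩ B) / (μ A * μ B) : A ∈ 𝒜, B ∈ ℬ, μ A > 0, μ B > 0 }`,
interpreted as `1` when no such pair of sets exists. -/
noncomputable def psi' {Ω : Type*} {m0 : MeasurableSpace Ω} (μ : Measure Ω)
    (mA mB : MeasurableSpace Ω) : ℝ :=
  open Classical in
  letI S : Set ℝ := {r | ∃ A B, MeasurableSet[mA] A ∧ MeasurableSet[mB] B ∧
    0 < μ A ∧ 0 < μ B ∧ r = (μ (A ∩ B)).toReal / ((μ A).toReal * (μ B).toReal)}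
  if S.Nonempty then sInf S else 1

/-! All ratios are nonnegative and the pair `(Ω, Ω)` has ratio `1`, so `0 ≤ ψ' ≤ 1`.
If `ψ' = 1`, then `μ A * μ B ≤ μ (A ∩ B)` for all `A ∈ 𝒜`, `B ∈ ℬ`. Applied to `B` and to `Bᶜ`,
the two inequalities add up to the equality `μ A = μ A`, so each of them is an equality. -/

section DependenceRatios

variable {Ω : Type*} {m0 : MeasurableSpace Ω} (μ : Measure Ω) (mA mB : MeasurableSpace Ω)

def dependenceRatios : Set ℝ :=
  {r | ∃ A B, MeasurableSet[mA] A ∧ MeasurableSet[mB] B ∧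
    0 < μ A ∧ 0 < μ B ∧ r = (μ (A ∩ B)).toReal / ((μ A).toReal * (μ B).toReal)}

variable {μ mA mB}

lemma nonneg_of_mem_dependenceRatios {r : ℝ} (hr : r ∈ dependenceRatios μ mA mB) : 0 ≤ r := by
  obtain ⟨A, B, -, -, -, -, rfl⟩ := hr
  positivity

lemma one_mem_dependenceRatios [IsProbabilityMeasure μ] : 1 ∈ dependenceRatios μ mA mB :=
  ⟨Set.univ, Set.univ, MeasurableSet.univ, MeasurableSet.univ, by simp, by simp, by simp⟩

lemma bddBelow_dependenceRatios : BddBelow (dependenceRatios μ mA mB) :=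
  ⟨0, fun _ ↦ nonneg_of_mem_dependenceRatios⟩

lemma psi'_eq_sInf_dependenceRatios [IsProbabilityMeasure μ] :
    psi' μ mA mB = sInf (dependenceRatios μ mA mB) := by
  classical
  exact if_pos ⟨1, one_mem_dependenceRatios⟩

lemma psi'_nonneg [IsProbabilityMeasure μ] : 0 ≤ psi' μ mA mB := by
  rw [psi'_eq_sInf_dependenceRatios]
  exact Real.sInf_nonneg fun _ ↦ nonneg_of_mem_dependenceRatios

lemma psi'_le_one [IsProbabilityMeasure μ] : psi' μ mA mB ≤ 1 := by
  rw [psi'_eq_sInf_dependenceRatios]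
  exact csInf_le bddBelow_dependenceRatios one_mem_dependenceRatios

lemma mul_le_measure_inter_of_one_le_dependenceRatios [IsFiniteMeasure μ]
    (h : ∀ r ∈ dependenceRatios μ mA mB, 1 ≤ r) {A B : Set Ω}
    (hAm : MeasurableSet[mA] A) (hBm : MeasurableSet[mB] B) : μ A * μ B ≤ μ (A ∩ B) := by
  rcases eq_zero_or_pos (μ A) with hA0 | hApos
  · simp [hA0]
  rcases eq_zero_or_pos (μ B) with hB0 | hBpos
  · simp [hB0]
  have hratio := h _ ⟨A, B, hAm, hBm, hApos, hBpos, rfl⟩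
  have hden : 0 < (μ A).toReal * (μ B).toReal :=
    mul_pos (ENNReal.toReal_pos hApos.ne' (measure_ne_top μ A))
      (ENNReal.toReal_pos hBpos.ne' (measure_ne_top μ B))
  rw [one_le_div hden, ← ENNReal.toReal_mul] at hratio
  exact (ENNReal.toReal_le_toReal (by finiteness) (measure_ne_top μ _)).mp hratio

lemma dependenceRatios_eq_singleton_one [IsProbabilityMeasure μ]
    (hind : ∀ A B, MeasurableSet[mA] A → MeasurableSet[mB] B → μ (A ∩ B) = μ A * μ B) :
    dependenceRatios μ mA mB = {1} := by
  refine Set.eq_singleton_iff_unique_mem.mpr ⟨one_mem_dependenceRatios, ?_⟩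
  rintro r ⟨A, B, hAm, hBm, hApos, hBpos, rfl⟩
  have hden : (μ A).toReal * (μ B).toReal ≠ 0 :=
    mul_ne_zero (ENNReal.toReal_ne_zero.mpr ⟨hApos.ne', measure_ne_top μ A⟩)
      (ENNReal.toReal_ne_zero.mpr ⟨hBpos.ne', measure_ne_top μ B⟩)
  rw [hind A B hAm hBm, ENNReal.toReal_mul, div_self hden]

end DependenceRatios

lemma measure_inter_eq_mul_of_le_of_le_compl {Ω : Type*} {m0 : MeasurableSpace Ω}
    {μ : Measure Ω} [IsProbabilityMeasure μ] {A B : Set Ω} (hB : MeasurableSet B)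
    (h : μ A * μ B ≤ μ (A ∩ B)) (hc : μ A * μ Bᶜ ≤ μ (A ∩ Bᶜ)) :
    μ (A ∩ B) = μ A * μ B := by
  refine le_antisymm ?_ h
  have hsum : μ (A ∩ B) + μ (A ∩ Bᶜ) ≤ μ A * μ B + μ (A ∩ Bᶜ) :=
    calc μ (A ∩ B) + μ (A ∩ Bᶜ) = μ A := by rw [← Set.sdiff_eq, measure_inter_add_sdiff A hB]
      _ = μ A * μ B + μ A * μ Bᶜ := by
        rw [← mul_add, measure_add_measure_compl hB, measure_univ, mul_one]
      _ ≤ μ A * μ B + μ (A ∩ Bᶜ) := by gcongr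
  exact (ENNReal.add_le_add_iff_right (measure_ne_top μ _)).mp hsum

theorem psi'_mem_Icc_and_eq_one_iff_indep_general {Ω : Type*} {m0 : MeasurableSpace Ω}
    (μ : Measure Ω) [IsProbabilityMeasure μ]
    (mA mB : MeasurableSpace Ω) (hB : mB ≤ m0) :
    0 ≤ psi' μ mA mB ∧ psi' μ mA mB ≤ 1 ∧
      (psi' μ mA mB = 1 ↔
        ∀ A B, MeasurableSet[mA] A → MeasurableSet[mB] B → μ (A ∩ B) = μ A * μ B) := by
  refine ⟨psi'_nonneg, psi'_le_one, fun h A B hAm hBm ↦ ?_, fun hind ↦ ?_⟩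
  · have hle : ∀ r ∈ dependenceRatios μ mA mB, 1 ≤ r := fun r hr ↦ by
      rw [← h, psi'_eq_sInf_dependenceRatios]
      exact csInf_le bddBelow_dependenceRatios hr
    exact measure_inter_eq_mul_of_le_of_le_compl (hB B hBm)
      (mul_le_measure_inter_of_one_le_dependenceRatios hle hAm hBm)
      (mul_le_measure_inter_of_one_le_dependenceRatios hle hAm hBm.compl)
  · rw [psi'_eq_sInf_dependenceRatios, dependenceRatios_eq_singleton_one hind, csInf_singleton]

/-- `0 ≤ ψ'(𝒜, ℬ) ≤ 1`, and `ψ'(𝒜, ℬ) = 1` iff `𝒜` and `ℬ` are independent. -/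
theorem psi'_mem_Icc_and_eq_one_iff_indep {Ω : Type*} {m0 : MeasurableSpace Ω}
    (μ : Measure Ω) [IsProbabilityMeasure μ]
    (mA mB : MeasurableSpace Ω) (hA : mA ≤ m0) (hB : mB ≤ m0) :
    0 ≤ psi' μ mA mB ∧ psi' μ mA mB ≤ 1 ∧
      (psi' μ mA mB = 1 ↔
        ∀ A B, MeasurableSet[mA] A → MeasurableSet[mB] B → μ (A ∩ B) = μ A * μ B) :=
  psi'_mem_Icc_and_eq_one_iff_indep_general μ mA mB hB
end

section
/- Let (Ω, F, μ) be a probability space, A, B sub-σ-algebras of F, and c = ψ'(A,B). Let ν be the pushforward of μ under the diagonal map T: Ω → Ω×Ω, ω ↦ (ω,ω), viewed as a measure on A⊗B, and let μ_1, μ_2 be the restrictions of μ to A and B. Then ν ≥ c(μ_1 ⊗ μ_2), i.e., ν - c(μ_1 ⊗ μ_2) is a (nonnegative) measure on A⊗B. -/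
/-!
On a measurable rectangle `A ×ˢ B` the two measures take the values `c μ(A) μ(B)` and
`μ(A ∩ B)`, so the inequality there is the definition of `c = ψ'(𝒜, ℬ)`, and it adds up over
finite disjoint unions of rectangles. Rectangles form a semiring generating `𝒜 ⊗ ℬ`, so these
finite unions approximate every set of `𝒜 ⊗ ℬ` up to arbitrarily small measure for the finite
measure `ν + c (μ₁ ⊗ μ₂)`, and the inequality passes to the limit.
-/

open MeasureTheory
open scoped ENNReal

open Set MeasurableSpace
open scoped symmDiff

namespace MeasureTheory

lemma IsSetRing.isSetSemiring_image2_prod {α β : Type*} {C : Set (Set α)} {D : Set (Set β)}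
    (hC : IsSetRing C) (hD : IsSetRing D) : IsSetSemiring (image2 (· ×ˢ ·) C D) where
  empty_mem := ⟨∅, hC.empty_mem, ∅, hD.empty_mem, empty_prod⟩
  inter_mem := by
    rintro _ ⟨s₁, hs₁, t₁, ht₁, rfl⟩ _ ⟨s₂, hs₂, t₂, ht₂, rfl⟩
    exact ⟨_, hC.inter_mem hs₁ hs₂, _, hD.inter_mem ht₁ ht₂, prod_inter_prod.symm⟩
  sdiff_eq_sUnion' := by
    classical
    rintro _ ⟨s₁, hs₁, t₁, ht₁, rfl⟩ _ ⟨s₂, hs₂, t₂, ht₂, rfl⟩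
    refine ⟨{(s₁ \ s₂) ×ˢ t₁, (s₁ ∩ s₂) ×ˢ (t₁ \ t₂)}, ?_, ?_, ?_⟩
    · simp only [Finset.coe_insert, Finset.coe_singleton, insert_subset_iff,
        singleton_subset_iff]
      exact ⟨⟨_, hC.sdiff_mem hs₁ hs₂, _, ht₁, rfl⟩,
        ⟨_, hC.inter_mem hs₁ hs₂, _, hD.sdiff_mem ht₁ ht₂, rfl⟩⟩
    · simp only [Finset.coe_insert, Finset.coe_singleton]
      refine (pairwiseDisjoint_singleton _ _).insert fun u hu _ => ?_
      rw [mem_singleton_iff.mp hu]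
      exact disjoint_prod.mpr (Or.inl (disjoint_sdiff_left.mono_right inter_subset_right))
    · ext ⟨x, y⟩
      simp only [mem_sdiff, mem_prod, Finset.coe_insert, Finset.coe_singleton, sUnion_insert,
        sUnion_singleton, mem_union, mem_inter_iff]
      tauto

lemma isSetRing_measurableSet {α : Type*} {m : MeasurableSpace α} :
    IsSetRing {s : Set α | MeasurableSet[m] s} :=
  ⟨.empty, fun _ _ => .union, fun _ _ => .diff⟩

variable {α : Type*} {mα : MeasurableSpace α} {μ ν : Measure α} {C : Set (Set α)}

lemma Measure.apply_le_apply_of_mem_supClosure (hC : IsSetSemiring C)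
    (hCm : ∀ t ∈ C, MeasurableSet t) (hle : ∀ t ∈ C, μ t ≤ ν t) {t : Set α}
    (ht : t ∈ supClosure C) : μ t ≤ ν t := by
  obtain ⟨P, hPC⟩ := hC.mem_supClosure_iff.mp ht
  have hunion : ⋃₀ (P.parts : Set (Set α)) = t := by
    rw [← Finset.sup_id_set_eq_sUnion, P.sup_parts]
  have hPm : ∀ p ∈ (P.parts : Set (Set α)), MeasurableSet p := fun p hp => hCm p (hPC hp)
  rw [← hunion, measure_sUnion P.parts.countable_toSet P.disjoint hPm,
    measure_sUnion P.parts.countable_toSet P.disjoint hPm]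
  exact ENNReal.tsum_le_tsum fun p => hle p (hPC p.2)

theorem Measure.le_of_generateFrom_isSetSemiring [IsFiniteMeasure μ] [IsFiniteMeasure ν]
    (hC : IsSetSemiring C) (hCspan : IsCountablySpanning C) (hgen : mα = generateFrom C)
    (hle : ∀ t ∈ C, μ t ≤ ν t) : μ ≤ ν := by
  have hCm : ∀ t ∈ C, MeasurableSet t := fun t ht => hgen ▸ measurableSet_generateFrom ht
  refine Measure.le_iff.mpr fun s hs => ENNReal.le_of_forall_pos_le_add fun ε hε _ => ?_
  obtain ⟨D, hDcount, hDC, hDcover⟩ : ∃ D : Set (Set α), D.Countable ∧ D ⊆ C ∧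
      (μ + ν) (⋃₀ D)ᶜ = 0 := by
    obtain ⟨f, hfC, hf⟩ := hCspan
    exact ⟨range f, countable_range f, range_subset_iff.mpr hfC, by simp [sUnion_range, hf]⟩
  obtain ⟨t, htC, hts⟩ := exists_measure_symmDiff_lt_of_generateFrom_isSetSemiring hC
    ⟨D, hDcount, hDC, hDcover⟩ hgen hs (ENNReal.coe_pos.mpr hε)
  calc μ s ≤ μ (t ∆ s) + μ t :=
        (measure_mono (le_symmDiff_sup_left t s)).trans (measure_union_le _ _)
    _ ≤ μ (t ∆ s) + ν t :=
        add_le_add le_rfl (Measure.apply_le_apply_of_mem_supClosure hC hCm hle htC)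
    _ ≤ μ (t ∆ s) + (ν (t ∆ s) + ν s) := by
        gcongr; exact (measure_mono (le_symmDiff_sup_right t s)).trans (measure_union_le _ _)
    _ = ν s + (μ + ν) (t ∆ s) := by rw [Measure.add_apply]; ring
    _ ≤ ν s + ε := by gcongr

end MeasureTheory

section Psi

variable {Ω : Type*} {m0 : MeasurableSpace Ω} {μ : Measure Ω} {mA mB : MeasurableSpace Ω}
  {A B : Set Ω}

lemma psi'_le_div (hA : MeasurableSet[mA] A) (hB : MeasurableSet[mB] B) (hμA : 0 < μ A)
    (hμB : 0 < μ B) :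
    psi' μ mA mB ≤ (μ (A ∩ B)).toReal / ((μ A).toReal * (μ B).toReal) := by
  unfold psi'
  rw [if_pos ⟨_, A, B, hA, hB, hμA, hμB, rfl⟩]
  refine csInf_le ⟨0, ?_⟩ ⟨A, B, hA, hB, hμA, hμB, rfl⟩
  rintro _ ⟨_, _, -, -, -, -, rfl⟩
  positivity

lemma ofReal_psi'_mul_le [IsFiniteMeasure μ] (hA : MeasurableSet[mA] A)
    (hB : MeasurableSet[mB] B) :
    ENNReal.ofReal (psi' μ mA mB) * (μ A * μ B) ≤ μ (A ∩ B) := by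
  rcases eq_zero_or_pos (μ A) with hμA | hμA
  · simp [hμA]
  rcases eq_zero_or_pos (μ B) with hμB | hμB
  · simp [hμB]
  have hprod₀ : μ A * μ B ≠ 0 := mul_ne_zero hμA.ne' hμB.ne'
  have hprod_top : μ A * μ B ≠ ∞ := ENNReal.mul_ne_top (measure_ne_top _ _) (measure_ne_top _ _)
  calc ENNReal.ofReal (psi' μ mA mB) * (μ A * μ B)
      ≤ ENNReal.ofReal ((μ (A ∩ B)).toReal / ((μ A).toReal * (μ B).toReal)) * (μ A * μ B) := by
        gcongr; exact psi'_le_div hA hB hμA hμB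
    _ = μ (A ∩ B) / (μ A * μ B) * (μ A * μ B) := by
        rw [← ENNReal.toReal_mul, ← ENNReal.toReal_div,
          ENNReal.ofReal_toReal (ENNReal.div_ne_top (measure_ne_top _ _) hprod₀)]
    _ = μ (A ∩ B) := ENNReal.div_mul_cancel hprod₀ hprod_top

end Psi

/-- Let `ν` be the pushforward of `μ` under the diagonal map `ω ↦ (ω, ω)`, viewed as a
measure on the product σ-algebra `𝒜 ⊗ ℬ`, and let `μ₁, μ₂` be the restrictions (trims) of `μ`
to `𝒜` and `ℬ`.  Then `ν ≥ c (μ₁ ⊗ μ₂)` where `c = ψ'(𝒜, ℬ)`, i.e. `ν - c (μ₁ ⊗ μ₂)` is a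
nonnegative measure on `𝒜 ⊗ ℬ`. -/
theorem smul_prod_le_map_diagonal {Ω : Type*} {m0 : MeasurableSpace Ω}
    (μ : Measure Ω) [IsProbabilityMeasure μ]
    (mA mB : MeasurableSpace Ω) (hA : mA ≤ m0) (hB : mB ≤ m0) :
    ∀ s : Set (Ω × Ω), MeasurableSet[MeasurableSpace.prod mA mB] s →
      ENNReal.ofReal (psi' μ mA mB) *
          (@Measure.prod Ω Ω mA mB (μ.trim hA) (μ.trim hB)) s ≤
        (@Measure.map Ω (Ω × Ω) m0 (MeasurableSpace.prod mA mB) (fun ω => (ω, ω)) μ) s := by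
  intro s hs
  have hdiag : Measurable[m0, mA.prod mB] (fun ω => (ω, ω)) :=
    (measurable_id'' hA).prodMk (measurable_id'' hB)
  have hfin := (@Measure.prod Ω Ω mA mB (μ.trim hA) (μ.trim hB)).smul_finite
    (ENNReal.ofReal_ne_top (r := psi' μ mA mB))
  have key : ENNReal.ofReal (psi' μ mA mB) • @Measure.prod Ω Ω mA mB (μ.trim hA) (μ.trim hB) ≤
      @Measure.map Ω (Ω × Ω) m0 (mA.prod mB) (fun ω => (ω, ω)) μ := by
    refine Measure.le_of_generateFrom_isSetSemiring (mα := mA.prod mB)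
      (C := image2 (· ×ˢ ·) {A | MeasurableSet[mA] A} {B | MeasurableSet[mB] B}) ?_ ?_
      (@generateFrom_prod Ω Ω mA mB).symm ?_
    · exact isSetRing_measurableSet.isSetSemiring_image2_prod isSetRing_measurableSet
    · exact (@isCountablySpanning_measurableSet Ω mA).prod
        (@isCountablySpanning_measurableSet Ω mB)
    · rintro _ ⟨A, hA', B, hB', rfl⟩
      rw [Measure.smul_apply, smul_eq_mul, @Measure.prod_prod Ω Ω mA mB _ _ _ A B,
        trim_measurableSet_eq hA hA', trim_measurableSet_eq hB hB',
        Measure.map_apply hdiag (hA'.prod hB')]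
      exact ofReal_psi'_mul_le hA' hB'
  simpa using Measure.le_iff.mp key s hs
end
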